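/- Let h : K → L be a homomorphism of bounded lattices. Then the canonical lifting h^δ : K^δ → L^δ, defined by h^δ(u) = ⋁{⋀h([x,y]∩K) : filter element x ≤ u ≤ ideal element y}, is a complete lattice homomorphism, and it is continuous with respect to the interval topologies on K^δ and L^δ. -/

import Mathlib

/-- `e : L → C` is a canonical extension of the bounded lattice `L`:
a dense and compact lattice completion. -/
def IsCanonExt {L C : Type*} [Lattice L] [BoundedOrder L] [CompleteLattice C]
    (e : L → C) : Prop :=
  Function.Injective e ∧
  (∀ a b : L, e (a ⊓ b) = e a ⊓ e b) ∧
  (∀ a b : L, e (a ⊔ b) = e a ⊔ e b) ∧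
  e ⊥ = ⊥ ∧ e ⊤ = ⊤ ∧
  (∀ c : C, ∃ 𝒮 : Set (Set L), c = ⨆ S ∈ 𝒮, sInf (e '' S)) ∧
  (∀ c : C, ∃ 𝒮 : Set (Set L), c = ⨅ S ∈ 𝒮, sSup (e '' S)) ∧
  (∀ S T : Set L, sInf (e '' S) ≤ sSup (e '' T) →
    ∃ S' T' : Finset L, ↑S' ⊆ S ∧ ↑T' ⊆ T ∧ S'.inf id ≤ T'.sup id)

/-- A filter element of the canonical extension: a meet of elements of `e(L)`. -/
def FilterElt {L C : Type*} [Lattice L] [BoundedOrder L] [CompleteLattice C]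
    (e : L → C) (x : C) : Prop :=
  ∃ S : Set L, x = sInf (e '' S)

/-- An ideal element of the canonical extension: a join of elements of `e(L)`. -/
def IdealElt {L C : Type*} [Lattice L] [BoundedOrder L] [CompleteLattice C]
    (e : L → C) (y : C) : Prop :=
  ∃ S : Set L, y = sSup (e '' S)

/-- The canonical lifting of a map `h : K → L` to the canonical extensions:
`h^δ(u) = ⋁ { ⋀ e_L(h([x,y] ∩ K)) : filter elt x ≤ u ≤ ideal elt y }`. -/
noncomputable def canLift {K L CK CL : Type*}
    [Lattice K] [BoundedOrder K] [Lattice L] [BoundedOrder L]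
    [CompleteLattice CK] [CompleteLattice CL]
    (eK : K → CK) (eL : L → CL) (h : K → L) (u : CK) : CL :=
  sSup {z : CL | ∃ x y : CK, FilterElt eK x ∧ IdealElt eK y ∧
    x ≤ u ∧ u ≤ y ∧
    z = sInf (eL '' (h '' {a : K | x ≤ eK a ∧ eK a ≤ y}))}

/-!
The lifting `h^δ u` is the join of the values `⋀ {h a : x ≤ a}` at filter elements `x ≤ u`.
By compactness, such a value lies below an ideal element `q` of `L^δ` iff `x` lies below the
ideal element `⋁ {a : h a ≤ q}` of `K^δ`; together with density this yields a right adjoint of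
`h^δ`. Dually, `h^δ u` is also the meet of the values `⋁ {h a : a ≤ y}` at ideal elements
`y ≥ u`, which yields a left adjoint. A map with both adjoints preserves all joins and meets,
and pulls principal up- and downsets back to principal ones, so it is continuous for the interval
topologies.
-/

open Set

lemma supClosed_Iic {α : Type*} [SemilatticeSup α] (a : α) : SupClosed (Iic a) :=
  fun _ hb _ hc => sup_le hb hc

lemma infClosed_Ici {α : Type*} [SemilatticeInf α] (a : α) : InfClosed (Ici a) :=
  fun _ hb _ hc => le_inf hb hc

section

variable {L C : Type*} [Lattice L] [BoundedOrder L] [CompleteLattice C]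

lemma filterElt_apply (e : L → C) (a : L) : FilterElt e (e a) := ⟨{a}, by simp⟩

lemma idealElt_apply (e : L → C) (a : L) : IdealElt e (e a) := ⟨{a}, by simp⟩

end

namespace IsCanonExt

variable {L C : Type*} [Lattice L] [BoundedOrder L] [CompleteLattice C] {e : L → C}

def toBoundedLatticeHom (he : IsCanonExt e) : BoundedLatticeHom L C where
  toFun := e
  map_sup' := he.2.2.1
  map_inf' := he.2.1
  map_top' := he.2.2.2.2.1
  map_bot' := he.2.2.2.1

lemma monotone (he : IsCanonExt e) : Monotone e := OrderHomClass.mono he.toBoundedLatticeHom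

lemma compact (he : IsCanonExt e) {S T : Set L} (hST : sInf (e '' S) ≤ sSup (e '' T)) :
    ∃ S' T' : Finset L, ↑S' ⊆ S ∧ ↑T' ⊆ T ∧ S'.inf id ≤ T'.sup id :=
  he.2.2.2.2.2.2.2 S T hST

lemma le_iff_le (he : IsCanonExt e) {a b : L} : e a ≤ e b ↔ a ≤ b := by
  refine ⟨fun hab => ?_, fun hab => he.monotone hab⟩
  obtain ⟨S', T', hS', hT', hle⟩ := he.compact (S := {a}) (T := {b}) (by simpa using hab)
  calc a ≤ S'.inf id := Finset.le_inf fun c hc => (hS' hc).ge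
    _ ≤ T'.sup id := hle
    _ ≤ b := Finset.sup_le fun c hc => (hT' hc).le

lemma le_iff_forall_filterElt (he : IsCanonExt e) {u w : C} :
    u ≤ w ↔ ∀ x, FilterElt e x → x ≤ u → x ≤ w := by
  refine ⟨fun huw x _ hxu => hxu.trans huw, fun H => ?_⟩
  obtain ⟨𝒮, rfl⟩ := he.2.2.2.2.2.1 u
  exact iSup₂_le fun S hS => H _ ⟨S, rfl⟩ (le_iSup₂ (f := fun S _ => sInf (e '' S)) S hS)

lemma le_iff_forall_idealElt (he : IsCanonExt e) {u w : C} :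
    w ≤ u ↔ ∀ y, IdealElt e y → u ≤ y → w ≤ y := by
  refine ⟨fun hwu y _ huy => hwu.trans huy, fun H => ?_⟩
  obtain ⟨𝒮, rfl⟩ := he.2.2.2.2.2.2.1 u
  exact le_iInf₂ fun S hS => H _ ⟨S, rfl⟩ (iInf₂_le (f := fun S _ => sSup (e '' S)) S hS)

lemma exists_mem_le_of_sInf_le (he : IsCanonExt e) {F : Set L} (hF : InfClosed F)
    (hF_top : ⊤ ∈ F) {q : C} (hq : IdealElt e q) (hle : sInf (e '' F) ≤ q) :
    ∃ b ∈ F, e b ≤ q := by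
  obtain ⟨T, rfl⟩ := hq
  obtain ⟨F', T', hF', hT', hle'⟩ := he.compact hle
  refine ⟨F'.inf id,
    Finset.inf_induction hF_top (fun _ ha _ hb => hF ha hb) fun b hb => hF' hb, ?_⟩
  calc e (F'.inf id) ≤ e (T'.sup id) := he.monotone hle'
    _ = T'.sup e := map_finset_sup he.toBoundedLatticeHom T' id
    _ ≤ sSup (e '' T) := Finset.sup_le fun a ha => le_sSup (mem_image_of_mem e (hT' ha))

lemma exists_mem_le_of_le_sSup (he : IsCanonExt e) {D : Set L} (hD : SupClosed D)
    (hD_bot : ⊥ ∈ D) {p : C} (hp : FilterElt e p) (hle : p ≤ sSup (e '' D)) :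
    ∃ b ∈ D, p ≤ e b := by
  obtain ⟨S, rfl⟩ := hp
  obtain ⟨S', D', hS', hD', hle'⟩ := he.compact hle
  refine ⟨D'.sup id,
    Finset.sup_induction hD_bot (fun _ ha _ hb => hD ha hb) fun b hb => hD' hb, ?_⟩
  calc sInf (e '' S)
      ≤ S'.inf e := Finset.le_inf fun a ha => sInf_le (mem_image_of_mem e (hS' ha))
    _ = e (S'.inf id) := (map_finset_inf he.toBoundedLatticeHom S' id).symm
    _ ≤ e (D'.sup id) := he.monotone hle'

lemma exists_between (he : IsCanonExt e) {x y : C} (hx : FilterElt e x) (hy : IdealElt e y)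
    (hxy : x ≤ y) : ∃ a, x ≤ e a ∧ e a ≤ y := by
  obtain ⟨S, rfl⟩ := hx
  refine he.exists_mem_le_of_sInf_le ((infClosed_Ici _).preimage he.toBoundedLatticeHom)
    (le_top.trans_eq (map_top he.toBoundedLatticeHom).symm) hy
    ((sInf_le_sInf (image_mono fun _ ha => sInf_le (mem_image_of_mem e ha))).trans hxy)

end IsCanonExt

section CanLift

variable {K L CK CL : Type*} [Lattice K] [BoundedOrder K] [Lattice L] [BoundedOrder L]
  [CompleteLattice CK] [CompleteLattice CL] {eK : K → CK} {eL : L → CL}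

noncomputable def meetLift (eK : K → CK) (eL : L → CL) (h : K → L) (x : CK) : CL :=
  sInf (eL '' (h '' (eK ⁻¹' Ici x)))

noncomputable def joinLift (eK : K → CK) (eL : L → CL) (h : K → L) (y : CK) : CL :=
  sSup (eL '' (h '' (eK ⁻¹' Iic y)))

noncomputable def joinPullback (eK : K → CK) (eL : L → CL) (h : K → L) (q : CL) : CK :=
  sSup (eK '' ((eL ∘ h) ⁻¹' Iic q))

noncomputable def meetPullback (eK : K → CK) (eL : L → CL) (h : K → L) (p : CL) : CK :=
  sInf (eK '' ((eL ∘ h) ⁻¹' Ici p))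

noncomputable def canLiftUpperAdjoint (eK : K → CK) (eL : L → CL) (h : K → L) (v : CL) : CK :=
  ⨅ (q) (_ : IdealElt eL q) (_ : v ≤ q), joinPullback eK eL h q

noncomputable def canLiftLowerAdjoint (eK : K → CK) (eL : L → CL) (h : K → L) (v : CL) : CK :=
  ⨆ (p) (_ : FilterElt eL p) (_ : p ≤ v), meetPullback eK eL h p

lemma IsCanonExt.monotone_comp (heL : IsCanonExt eL) (f : BoundedLatticeHom K L) :
    Monotone (eL ∘ f) :=
  heL.monotone.comp (OrderHomClass.mono f)

lemma apply_le_of_le_joinPullback (heK : IsCanonExt eK) (heL : IsCanonExt eL)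
    (f : BoundedLatticeHom K L) {q : CL} {a : K} (ha : eK a ≤ joinPullback eK eL f q) :
    eL (f a) ≤ q := by
  let g := heL.toBoundedLatticeHom.comp f
  obtain ⟨b, hb, hab⟩ := heK.exists_mem_le_of_le_sSup ((supClosed_Iic q).preimage g)
    ((map_bot g).trans_le bot_le) (filterElt_apply eK a) ha
  exact (heL.monotone_comp f (heK.le_iff_le.mp hab)).trans hb

lemma le_apply_of_meetPullback_le (heK : IsCanonExt eK) (heL : IsCanonExt eL)
    (f : BoundedLatticeHom K L) {p : CL} {a : K} (ha : meetPullback eK eL f p ≤ eK a) :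
    p ≤ eL (f a) := by
  let g := heL.toBoundedLatticeHom.comp f
  obtain ⟨b, hb, hba⟩ := heK.exists_mem_le_of_sInf_le ((infClosed_Ici p).preimage g)
    (le_top.trans_eq (map_top g).symm) (idealElt_apply eK a) ha
  exact hb.trans (heL.monotone_comp f (heK.le_iff_le.mp hba))

lemma sInf_image_Icc_le_meetLift (heK : IsCanonExt eK) (heL : IsCanonExt eL)
    (f : BoundedLatticeHom K L) {x y : CK} (hx : FilterElt eK x) (hy : IdealElt eK y)
    (hxy : x ≤ y) :
    sInf (eL '' (f '' {a | x ≤ eK a ∧ eK a ≤ y})) ≤ meetLift eK eL f x := by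
  obtain ⟨c, hxc, hcy⟩ := heK.exists_between hx hy hxy
  refine le_sInf ?_
  rintro _ ⟨_, ⟨a, hxa, rfl⟩, rfl⟩
  have hac : a ⊓ c ∈ {a | x ≤ eK a ∧ eK a ≤ y} :=
    ⟨(le_inf hxa hxc).trans_eq (map_inf heK.toBoundedLatticeHom a c).symm,
      (heK.monotone inf_le_right).trans hcy⟩
  exact le_trans (sInf_le (mem_image_of_mem eL (mem_image_of_mem f hac)))
    (heL.monotone_comp f inf_le_left)

lemma canLift_le_iff (heK : IsCanonExt eK) (heL : IsCanonExt eL) (f : BoundedLatticeHom K L)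
    {u : CK} {v : CL} :
    canLift eK eL f u ≤ v ↔ ∀ x, FilterElt eK x → x ≤ u → meetLift eK eL f x ≤ v := by
  rw [_root_.canLift, sSup_le_iff]
  constructor
  · intro H x hx hxu
    have htop : IdealElt eK ⊤ := (map_top heK.toBoundedLatticeHom).subst (idealElt_apply eK ⊤)
    refine H _ ⟨x, ⊤, hx, htop, hxu, le_top, ?_⟩
    simp [meetLift, preimage, Ici]
  · rintro H _ ⟨x, y, hx, hy, hxu, huy, rfl⟩
    exact (sInf_image_Icc_le_meetLift heK heL f hx hy (hxu.trans huy)).trans (H x hx hxu)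

lemma meetLift_le_iff (heK : IsCanonExt eK) (heL : IsCanonExt eL) (f : BoundedLatticeHom K L)
    {x : CK} {q : CL} (hx : FilterElt eK x) (hq : IdealElt eL q) :
    meetLift eK eL f x ≤ q ↔ x ≤ joinPullback eK eL f q := by
  constructor
  · intro hxq
    obtain ⟨_, ⟨a, hxa, rfl⟩, haq⟩ := heL.exists_mem_le_of_sInf_le
      (((infClosed_Ici x).preimage heK.toBoundedLatticeHom).image f)
      ⟨⊤, le_top.trans_eq (map_top heK.toBoundedLatticeHom).symm, map_top f⟩ hq hxq
    exact hxa.trans (le_sSup (mem_image_of_mem eK haq))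
  · intro hxq
    obtain ⟨a, hxa, haq⟩ := heK.exists_between hx ⟨_, rfl⟩ hxq
    exact (sInf_le (mem_image_of_mem eL (mem_image_of_mem f hxa))).trans
      (apply_le_of_le_joinPullback heK heL f haq)

lemma gc_canLift (heK : IsCanonExt eK) (heL : IsCanonExt eL) (f : BoundedLatticeHom K L) :
    GaloisConnection (canLift eK eL f) (canLiftUpperAdjoint eK eL f) := by
  intro u v
  simp only [canLiftUpperAdjoint, le_iInf_iff]
  rw [heL.le_iff_forall_idealElt]
  refine forall₃_congr fun q hq _ => ?_
  rw [canLift_le_iff heK heL f, heK.le_iff_forall_filterElt]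
  exact forall₃_congr fun x hx _ => meetLift_le_iff heK heL f hx hq

lemma le_canLift_iff (heK : IsCanonExt eK) (heL : IsCanonExt eL) (f : BoundedLatticeHom K L)
    {u : CK} {v : CL} :
    v ≤ canLift eK eL f u ↔ ∀ y, IdealElt eK y → u ≤ y → v ≤ joinLift eK eL f y := by
  refine ⟨fun H y hy huy => H.trans ((canLift_le_iff heK heL f).2 fun x hx hxu => ?_),
    fun H => heL.le_iff_forall_idealElt.2 fun q hq hq' => ?_⟩
  · obtain ⟨a, hxa, hay⟩ := heK.exists_between hx hy (hxu.trans huy)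
    exact le_trans (sInf_le (mem_image_of_mem eL (mem_image_of_mem f hxa)))
      (le_sSup (mem_image_of_mem eL (mem_image_of_mem f hay)))
  · have hu : u ≤ joinPullback eK eL f q :=
      ((gc_canLift heK heL f).le_iff_le.1 hq').trans (iInf₂_le_of_le q hq (iInf_le _ le_rfl))
    refine (H _ ⟨_, rfl⟩ hu).trans (sSup_le ?_)
    rintro _ ⟨_, ⟨a, ha, rfl⟩, rfl⟩
    exact apply_le_of_le_joinPullback heK heL f ha

lemma le_joinLift_iff (heK : IsCanonExt eK) (heL : IsCanonExt eL) (f : BoundedLatticeHom K L)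
    {p : CL} {y : CK} (hp : FilterElt eL p) (hy : IdealElt eK y) :
    p ≤ joinLift eK eL f y ↔ meetPullback eK eL f p ≤ y := by
  constructor
  · intro hpy
    obtain ⟨_, ⟨a, hay, rfl⟩, hpa⟩ := heL.exists_mem_le_of_le_sSup
      (((supClosed_Iic y).preimage heK.toBoundedLatticeHom).image f)
      ⟨⊥, (map_bot heK.toBoundedLatticeHom).trans_le bot_le, map_bot f⟩ hp hpy
    exact (sInf_le (mem_image_of_mem eK hpa)).trans hay
  · intro hpy
    obtain ⟨a, hpa, hay⟩ := heK.exists_between ⟨_, rfl⟩ hy hpy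
    exact (le_apply_of_meetPullback_le heK heL f hpa).trans
      (le_sSup (mem_image_of_mem eL (mem_image_of_mem f hay)))

lemma gc_canLiftLowerAdjoint (heK : IsCanonExt eK) (heL : IsCanonExt eL)
    (f : BoundedLatticeHom K L) :
    GaloisConnection (canLiftLowerAdjoint eK eL f) (canLift eK eL f) := by
  intro v u
  simp only [canLiftLowerAdjoint, iSup_le_iff]
  rw [heL.le_iff_forall_filterElt]
  refine forall₃_congr fun p hp _ => ?_
  rw [le_canLift_iff heK heL f, heK.le_iff_forall_idealElt]
  exact forall₃_congr fun y hy _ => (le_joinLift_iff heK heL f hp hy).symm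

end CanLift

abbrev intervalTopology (α : Type*) [Preorder α] : TopologicalSpace α :=
  TopologicalSpace.generateFrom {U | ∃ a, U = (Ici a)ᶜ ∨ U = (Iic a)ᶜ}

lemma GaloisConnection.continuous_intervalTopology {α β : Type*} [Preorder α] [Preorder β]
    {l : β → α} {f : α → β} {r : β → α} (hl : GaloisConnection l f)
    (hr : GaloisConnection f r) :
    @Continuous α β (intervalTopology α) (intervalTopology β) f := by
  refine continuous_generateFrom_iff.2 ?_
  rintro _ ⟨b, rfl | rfl⟩
  · have hpre : f ⁻¹' Ici b = Ici (l b) := ext fun a => (hl b a).symm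
    rw [preimage_compl, hpre]
    exact TopologicalSpace.isOpen_generateFrom_of_mem ⟨_, Or.inl rfl⟩
  · have hpre : f ⁻¹' Iic b = Iic (r b) := ext fun a => hr a b
    rw [preimage_compl, hpre]
    exact TopologicalSpace.isOpen_generateFrom_of_mem ⟨_, Or.inr rfl⟩

/-- The canonical lifting of a bounded-lattice homomorphism is a complete
lattice homomorphism and is continuous for the interval topologies. -/
theorem stmt_13 {K L CK CL : Type*}
    [Lattice K] [BoundedOrder K] [Lattice L] [BoundedOrder L]
    [CompleteLattice CK] [CompleteLattice CL]
    (eK : K → CK) (eL : L → CL)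
    (heK : IsCanonExt eK) (heL : IsCanonExt eL)
    (h : K → L)
    (hinf : ∀ a b : K, h (a ⊓ b) = h a ⊓ h b)
    (hsup : ∀ a b : K, h (a ⊔ b) = h a ⊔ h b)
    (hbot : h ⊥ = ⊥) (htop : h ⊤ = ⊤) :
    (∀ S : Set CK, canLift eK eL h (sSup S) = sSup (canLift eK eL h '' S)) ∧
    (∀ S : Set CK, canLift eK eL h (sInf S) = sInf (canLift eK eL h '' S)) ∧
    (let ιK : TopologicalSpace CK := TopologicalSpace.generateFrom
        {U : Set CK | ∃ a : CK, U = (Set.Ici a)ᶜ ∨ U = (Set.Iic a)ᶜ}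
     let ιL : TopologicalSpace CL := TopologicalSpace.generateFrom
        {U : Set CL | ∃ a : CL, U = (Set.Ici a)ᶜ ∨ U = (Set.Iic a)ᶜ}
     @Continuous CK CL ιK ιL (canLift eK eL h)) := by
  let f : BoundedLatticeHom K L :=
    { toFun := h, map_sup' := hsup, map_inf' := hinf, map_top' := htop, map_bot' := hbot }
  have gcUpper := gc_canLift heK heL f
  have gcLower := gc_canLiftLowerAdjoint heK heL f
  refine ⟨fun S => ?_, fun S => ?_, gcLower.continuous_intervalTopology gcUpper⟩
  · rw [sSup_image]
    exact gcUpper.l_sSup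
  · rw [sInf_image]
    exact gcLower.u_sInf
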